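/- arXiv:1405.7757 — 2 statements merged into one kernel-verified Lean document; each statement's English description precedes it below -/
import Mathlib

section
/- In a directed graph with no loops having entrances, every loop is obtained by iterating a simple loop: if α is a loop at a vertex v, then there is a simple loop β at v and k ≥ 1 such that α = β^k (concatenation of k copies of β). -/
/-!
Suppose no loop has an entrance and `α` is a loop of length `m`. If two edges `α i`, `α j` have
the same range, then absence of entrances forces `α i = α j`, hence equal sources, hence equal
ranges of `α (i - 1)` and `α (j - 1)`, and so on around the loop: `α` is periodic with period
`j - i`. Taking `n` the least positive period of `α`, the function `α` factors through `ZMod n` as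
a loop `β`, and two edges of `β` with the same range would give a period that is not a multiple
of `n`.
-/

open Function

theorem Function.Periodic.apply_eq_apply_val_castHom {E : Type*} {m n : ℕ} [NeZero m]
    {α : ZMod m → E} (hd : n ∣ m) (h : Periodic α (n : ZMod m)) (x : ZMod m) :
    α x = α ((ZMod.castHom hd (ZMod n) x).val : ZMod m) := by
  have hval : (ZMod.castHom hd (ZMod n) x).val = x.val % n := by
    rw [ZMod.castHom_apply, ← ZMod.natCast_val, ZMod.val_natCast]
  rw [hval, Nat.mod_eq_sub_mul_div, Nat.cast_sub (Nat.mul_div_le x.val n), Nat.cast_mul,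
    mul_comm, h.sub_nat_mul_eq, ZMod.natCast_zmod_val]

theorem ZMod.exists_natCast_period_dvd {E : Type*} {m : ℕ} [NeZero m] (α : ZMod m → E) :
    ∃ n : ℕ, 0 < n ∧ Periodic α (n : ZMod m) ∧
      ∀ d : ℕ, Periodic α (d : ZMod m) → n ∣ d := by
  classical
  have hex : ∃ d : ℕ, 0 < d ∧ Periodic α (d : ZMod m) :=
    ⟨m, Nat.pos_of_neZero m, by simp [Periodic]⟩
  obtain ⟨hpos, hper⟩ := Nat.find_spec hex
  refine ⟨Nat.find hex, hpos, hper, fun d hd => Nat.dvd_of_mod_eq_zero ?_⟩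
  have hmod : Periodic α ((d % Nat.find hex : ℕ) : ZMod m) := by
    rw [Nat.mod_eq_sub_mul_div, Nat.cast_sub (Nat.mul_div_le d _), Nat.cast_mul, mul_comm]
    exact hd.sub_period (hper.nat_mul _)
  by_contra hne
  exact Nat.find_min hex (Nat.mod_lt d hpos) ⟨Nat.pos_of_ne_zero hne, hmod⟩

theorem ZMod.castHom_eq_zero_of_periodic {E : Type*} {m n : ℕ} [NeZero m] {α : ZMod m → E}
    (hd : n ∣ m) (hdvd : ∀ d : ℕ, Periodic α (d : ZMod m) → n ∣ d) {c : ZMod m}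
    (hc : Periodic α c) : ZMod.castHom hd (ZMod n) c = 0 := by
  rw [← ZMod.natCast_zmod_val c] at hc ⊢
  rw [map_natCast, ZMod.natCast_eq_zero_iff]
  exact hdvd _ hc

theorem periodic_sub_of_range_eq {V E : Type*} {m : ℕ} [NeZero m] {r s : E → V}
    {α : ZMod m → E}
    (hα : ∀ i, r (α i) = s (α (i + 1))) (hent : ∀ i e, r e = r (α i) → e = α i)
    {i j : ZMod m} (hij : r (α i) = r (α j)) : Periodic α (j - i) := by
  have hprev : ∀ x, r (α (x - 1)) = s (α x) := fun x => by rw [hα, sub_add_cancel]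
  have hback : ∀ t : ℕ, α (i - t) = α (j - t) := by
    intro t
    induction t with
    | zero => simpa using hent j (α i) hij
    | succ t ih =>
      push_cast
      rw [← sub_sub, ← sub_sub]
      exact hent _ _ (by rw [hprev, hprev, ih])
  intro x
  have hx := hback (i - x).val
  rw [ZMod.natCast_zmod_val, sub_sub_cancel] at hx
  rw [hx]
  congr 1
  ring

/-- In a graph in which no loop has an entrance, every loop is the iterate of a simple
loop based at the same vertex: if `α : ZMod m → E` is a loop, there are `n, k ≥ 1` with
`m = n * k` and a simple loop `β : ZMod n → E` at the same vertex with `α = β ∘ cast`. -/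
theorem loop_eq_iterate_simple_loop {V E : Type*} (r s : E → V)
    (hno : ∀ (n : ℕ), 0 < n → ∀ α : ZMod n → E,
      (∀ i, r (α i) = s (α (i + 1))) → ∀ (i : ZMod n) (e : E), r e = r (α i) → e = α i)
    (m : ℕ) (hm : 0 < m) (α : ZMod m → E)
    (hα : ∀ i, r (α i) = s (α (i + 1))) :
    ∃ (n k : ℕ), 0 < n ∧ 1 ≤ k ∧ m = n * k ∧
      ∃ (hd : n ∣ m) (β : ZMod n → E),
        (∀ i, r (β i) = s (β (i + 1))) ∧
        (Function.Injective fun i => r (β i)) ∧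
        s (β 0) = s (α 0) ∧
        ∀ i : ZMod m, α i = β (ZMod.castHom hd (ZMod n) i) := by
  have : NeZero m := ⟨hm.ne'⟩
  obtain ⟨n, hn, hper, hdvd⟩ := ZMod.exists_natCast_period_dvd α
  have hnm : n ∣ m := hdvd m (by simp [Periodic])
  set β : ZMod n → E := fun j => α (j.val : ZMod m)
  have hfactor : ∀ x, α x = β (ZMod.castHom hnm (ZMod n) x) :=
    hper.apply_eq_apply_val_castHom hnm
  have hcast_val : ∀ j : ZMod n, ZMod.castHom hnm (ZMod n) (j.val : ZMod m) = j := by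
    have : NeZero n := ⟨hn.ne'⟩
    intro j
    rw [map_natCast, ZMod.natCast_zmod_val]
  refine ⟨n, m / n, hn, (Nat.one_le_div_iff hn).2 (Nat.le_of_dvd hm hnm),
    (Nat.mul_div_cancel' hnm).symm, hnm, β, fun j => ?_, fun i j hij => ?_, by simp [β],
    hfactor⟩
  · rw [hα, hfactor, map_add, hcast_val, map_one]
  · have hzero := ZMod.castHom_eq_zero_of_periodic hnm hdvd
      (periodic_sub_of_range_eq hα (hno m hm α hα) hij)
    rwa [map_sub, hcast_val, hcast_val, sub_eq_zero, eq_comm] at hzero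
end

section
/- If a graph E contains a loop with an entrance, then in any Cuntz–Krieger E-family with all vertex projections nonzero, the C*-algebra generated is infinite (contains an infinite projection). -/
/-- A Cuntz–Krieger `E`-family in a `*`-algebra `A`, for the directed graph with vertices
`V`, edges `E`, range map `r` and source map `s`. -/
structure CKFamily {V E : Type*} [DecidableEq E] (r s : E → V) (A : Type*) [Ring A] [StarRing A] where
  /-- vertex projections -/
  p : V → A
  /-- edge partial isometries -/
  se : E → A
  p_sa : ∀ v, IsSelfAdjoint (p v)
  p_idem : ∀ v, p v * p v = p v
  p_orth : ∀ v w, v ≠ w → p v * p w = 0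
  rel : ∀ e f, star (se e) * se f = if e = f then p (s e) else 0
  range_le : ∀ e, p (r e) * se e = se e
  ck : ∀ (v : V) (hf : {e : E | r e = v}.Finite), hf.toFinset.Nonempty →
      p v = ∑ e ∈ hf.toFinset, se e * star (se e)

/-- `l` is a path, written as the list `(αₙ, …, α₁)` of its edges from range to source:
consecutive edges compose, `s αᵢ₊₁ = r αᵢ`. -/
def IsPath {V E : Type*} (r s : E → V) (l : List E) : Prop :=
  l ≠ [] ∧ l.Chain' fun a b => s a = r b

/-- The partial isometry `s_α = s_{αₙ} ⋯ s_{α₁}` associated to a path `α = (αₙ, …, α₁)`. -/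
def CKFamily.sp {V E : Type*} [DecidableEq E] {r s : E → V} {A : Type*} [Ring A] [StarRing A]
    (F : CKFamily r s A) (l : List E) : A :=
  (l.map F.se).prod

/-!
Let `α` be the loop at `v` and `t = s_α`. The Cuntz–Krieger relations give `t⋆ t = p_v` and
`p_v t = t`, and in a C*-algebra this makes `t t⋆` a projection below `p_v`. If `t t⋆ = p_v`, then
conjugating by the edges of `α` one at a time keeps the range projection full, down to the edge
`a` of `α` at which the entrance `e` arrives: `s_β s_β⋆ = p_{r(a)}` for the tail `β` of `α`
starting with `a`. But `s_e⋆ s_β = 0` since `e ≠ a`, whence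
`p_{s(e)} = s_e⋆ p_{r(a)} s_e = s_e⋆ s_β s_β⋆ s_e = 0`.
-/

section PartialIsometry

variable {A : Type*} [NonUnitalNormedRing A] [StarRing A] [CStarRing A] {t : A}

theorem mul_star_mul_self_of_isIdempotentElem (h : IsIdempotentElem (star t * t)) :
    t * (star t * t) = t := by
  have hzero : star (t * (star t * t) - t) * (t * (star t * t) - t) = 0 := by
    have h3 : star t * t * (star t * t) * (star t * t) = star t * t := by rw [h.eq, h.eq]
    rw [star_sub, star_mul, star_mul, star_star]
    calc _ = star t * t * (star t * t) * (star t * t) - star t * t * (star t * t)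
          - star t * t * (star t * t) + star t * t := by noncomm_ring
      _ = 0 := by rw [h3, h.eq]; abel
  exact sub_eq_zero.mp ((CStarRing.star_mul_self_eq_zero_iff _).mp hzero)

theorem isStarProjection_mul_star_self_of_isIdempotentElem (h : IsIdempotentElem (star t * t)) :
    IsStarProjection (t * star t) where
  isIdempotentElem := by
    rw [IsIdempotentElem, ← mul_assoc, mul_assoc t, mul_star_mul_self_of_isIdempotentElem h]
  isSelfAdjoint := .mul_star_self t

end PartialIsometry

namespace CKFamily

variable {V E : Type*} [DecidableEq E] {r s : E → V} {A : Type*} [Ring A] [StarRing A]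
  (F : CKFamily r s A)

@[simp]
theorem sp_cons (x : E) (l : List E) : F.sp (x :: l) = F.se x * F.sp l := by
  simp [sp]

theorem p_range_head_mul_sp {l : List E} (hne : l ≠ []) :
    F.p (r (l.head hne)) * F.sp l = F.sp l := by
  obtain ⟨x, l, rfl⟩ := List.exists_cons_of_ne_nil hne
  rw [List.head_cons, sp_cons, ← mul_assoc, F.range_le]

theorem star_sp_mul_p_range_head {l : List E} (hne : l ≠ []) :
    star (F.sp l) * F.p (r (l.head hne)) = star (F.sp l) := by
  simpa only [star_mul, (F.p_sa _).star_eq] using congr_arg star (F.p_range_head_mul_sp hne)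

theorem star_sp_mul_sp {l : List E} (hl : IsPath r s l) :
    star (F.sp l) * F.sp l = F.p (s (l.getLast hl.1)) := by
  obtain ⟨hne, hc⟩ := hl
  induction l with
  | nil => exact absurd rfl hne
  | cons x l ih =>
    rcases eq_or_ne l [] with rfl | hl
    · simp [sp, F.rel]
    have hxl : s x = r (l.head hl) := by
      obtain ⟨y, l, rfl⟩ := List.exists_cons_of_ne_nil hl
      exact (List.isChain_cons_cons.mp hc).1
    calc star (F.sp (x :: l)) * F.sp (x :: l)
        = star (F.sp l) * (star (F.se x) * F.se x) * F.sp l := by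
          rw [sp_cons, star_mul]; noncomm_ring
      _ = star (F.sp l) * F.sp l := by
          rw [F.rel, if_pos rfl, hxl, F.star_sp_mul_p_range_head]
      _ = F.p (s ((x :: l).getLast hne)) := by
          rw [ih hl hc.tail, List.getLast_cons hl]

theorem sp_mul_star_sp_of_cons {x : E} {l : List E} (hl : l ≠ []) (hxl : s x = r (l.head hl))
    (h : F.sp (x :: l) * star (F.sp (x :: l)) = F.p (r x)) :
    F.sp l * star (F.sp l) = F.p (r (l.head hl)) := by
  calc F.sp l * star (F.sp l)
      = F.p (r (l.head hl)) * (F.sp l * star (F.sp l)) * F.p (r (l.head hl)) := by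
        rw [← mul_assoc, F.p_range_head_mul_sp, mul_assoc, F.star_sp_mul_p_range_head]
    _ = star (F.se x) * (F.sp (x :: l) * star (F.sp (x :: l))) * F.se x := by
        have hx : star (F.se x) * F.se x = F.p (r (l.head hl)) := by rw [F.rel, if_pos rfl, hxl]
        rw [sp_cons, star_mul, ← hx]; noncomm_ring
    _ = F.p (r (l.head hl)) := by
        rw [h, mul_assoc, F.range_le, F.rel, if_pos rfl, hxl]

theorem sp_mul_star_sp_of_append {l₁ l₂ : List E} {a : E}
    (hc : (l₁ ++ a :: l₂).IsChain fun a b => s a = r b)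
    (h : F.sp (l₁ ++ a :: l₂) * star (F.sp (l₁ ++ a :: l₂)) =
      F.p (r ((l₁ ++ a :: l₂).head (by simp)))) :
    F.sp (a :: l₂) * star (F.sp (a :: l₂)) = F.p (r a) := by
  induction l₁ with
  | nil => exact h
  | cons x l₁ ih =>
    obtain ⟨y, l, hyl⟩ := List.exists_cons_of_ne_nil (by simp : l₁ ++ a :: l₂ ≠ [])
    rw [List.cons_append, hyl] at hc
    refine ih (hyl ▸ hc.tail) ?_
    simp only [List.cons_append, hyl] at h ⊢
    exact F.sp_mul_star_sp_of_cons (List.cons_ne_nil y l) (List.isChain_cons_cons.mp hc).1 h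

theorem sp_cons_mul_star_ne_of_entrance {e a : E} (hea : e ≠ a) (hr : r e = r a)
    (hpe : F.p (s e) ≠ 0) (l : List E) :
    F.sp (a :: l) * star (F.sp (a :: l)) ≠ F.p (r a) := by
  intro h
  apply hpe
  calc F.p (s e) = star (F.se e) * (F.p (r a) * F.se e) := by
        rw [← hr, F.range_le, F.rel, if_pos rfl]
    _ = star (F.se e) * F.se a * (F.sp l * star (F.sp (a :: l)) * F.se e) := by
        rw [← h, sp_cons]; noncomm_ring
    _ = 0 := by rw [F.rel, if_neg hea, zero_mul]

end CKFamily

theorem CKFamily.infinite_of_loop_with_entrance_general {V E : Type*} [DecidableEq E] {r s : E → V}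
    {A : Type*} [NormedRing A] [StarRing A] [CStarRing A]
    [PartialOrder A] [StarOrderedRing A]
    (F : CKFamily r s A) (hpv : ∀ v, F.p v ≠ 0)
    (l : List E) (hl : IsPath r s l) (hne : l ≠ [])
    (hloop : r (l.head hne) = s (l.getLast hne))
    (hentrance : ∃ (e : E) (a : E), a ∈ l ∧ r e = r a ∧ e ≠ a) :
    ∃ q t : A, IsSelfAdjoint q ∧ q * q = q ∧
      star t * t = q ∧ t * star t ≤ q ∧ t * star t ≠ q := by
  set v := s (l.getLast hne)
  set t := F.sp l
  have hq : IsStarProjection (F.p v) := ⟨F.p_idem v, F.p_sa v⟩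
  have htt : star t * t = F.p v := F.star_sp_mul_sp hl
  have hpt : F.p v * t = t := hloop ▸ F.p_range_head_mul_sp hne
  have htproj : IsStarProjection (t * star t) :=
    isStarProjection_mul_star_self_of_isIdempotentElem (htt ▸ hq.isIdempotentElem)
  refine ⟨F.p v, t, F.p_sa v, F.p_idem v, htt,
    htproj.le_of_mul_eq_right hq (by rw [← mul_assoc, hpt]), fun hfull => ?_⟩
  obtain ⟨e, a, ha, hr, hea⟩ := hentrance
  obtain ⟨l₁, l₂, rfl⟩ := List.append_of_mem ha
  exact F.sp_cons_mul_star_ne_of_entrance hea hr (hpv _) l₂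
    (F.sp_mul_star_sp_of_append hl.2 (hloop ▸ hfull))

/-- If a graph contains a loop with an entrance, then for any Cuntz–Krieger family with all
vertex projections nonzero, the ambient C*-algebra contains an infinite projection. -/
theorem CKFamily.infinite_of_loop_with_entrance {V E : Type*} [DecidableEq E] {r s : E → V}
    {A : Type*} [NormedRing A] [StarRing A] [CStarRing A] [NormedAlgebra ℂ A]
    [CompleteSpace A] [PartialOrder A] [StarOrderedRing A]
    (F : CKFamily r s A) (hpv : ∀ v, F.p v ≠ 0)
    (l : List E) (hl : IsPath r s l) (hne : l ≠ [])
    (hloop : r (l.head hne) = s (l.getLast hne))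
    (hentrance : ∃ (e : E) (a : E), a ∈ l ∧ r e = r a ∧ e ≠ a) :
    ∃ q t : A, IsSelfAdjoint q ∧ q * q = q ∧
      star t * t = q ∧ t * star t ≤ q ∧ t * star t ≠ q :=
  CKFamily.infinite_of_loop_with_entrance_general F hpv l hl hne hloop hentrance
end
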